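/- Let r₁, r₂ > 0. In ℝ², let O₁ = (0, r₁), O₂ = (0, −r₂), and define the involutes c₁(θ) = O₁ + r₁(sin θ, −cos θ) − r₁θ·(cos θ, sin θ) of the circle of radius r₁ centered at O₁ and c₂(ψ) = O₂ + r₂(sin ψ, cos ψ) − r₂ψ·(cos ψ, −sin ψ) of the circle of radius r₂ centered at O₂, both circles tangent to the x-axis at the origin. Let Rot_P(α) denote rotation of ℝ² about the point P by angle α. Then for every φ ≥ 0, setting α = (r₁/r₂)φ: (i) Rot_{O₁}(−φ)(c₁(φ)) = (−r₁φ, 0) = Rot_{O₂}(α)(c₂(α)), so the two rotated involutes meet at a common point on the common tangent line (the x-axis) of the two base circles; and (ii) at this common point, the tangent vectors of both rotated involute curves are parallel to (0,1), i.e., perpendicular to the x-axis. Hence as gear 1 rotates clockwise by φ and gear 2 rotates counterclockwise by (r₁/r₂)φ, the involute tooth flanks remain in tangential contact at a point moving along the common tangent line of the base circles. -/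

import Mathlib

/-- The point of the Euclidean plane with coordinates `(x, y)`. -/
noncomputable def V (x y : ℝ) : EuclideanSpace ℝ (Fin 2) := WithLp.toLp 2 ![x, y]

/-- Rotation of the plane about the origin by angle `α`. -/
noncomputable def Rot (α : ℝ) (p : EuclideanSpace ℝ (Fin 2)) :
    EuclideanSpace ℝ (Fin 2) :=
  V (Real.cos α * p 0 - Real.sin α * p 1) (Real.sin α * p 0 + Real.cos α * p 1)

/-- Rotation of the plane about the point `P` by angle `α`. -/
noncomputable def RotP (P : EuclideanSpace ℝ (Fin 2)) (α : ℝ)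
    (x : EuclideanSpace ℝ (Fin 2)) : EuclideanSpace ℝ (Fin 2) :=
  P + Rot α (x - P)

/-!
Rotating each flank back by the angle through which its string has been unwound lays the string
along the common tangent of the base circles: the contact point is the free end of a string of
length `r₁ φ = r₂ α` lying on the x-axis. The tangent of an involute is parallel to the radius
at the point where the string leaves the circle, and after the rotation that radius is vertical.
-/

open Real

section Plane

@[simp] lemma V_apply_zero (x y : ℝ) : V x y 0 = x := rfl

@[simp] lemma V_apply_one (x y : ℝ) : V x y 1 = y := rfl

lemma V_add (a b c d : ℝ) : V a b + V c d = V (a + c) (b + d) := by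
  ext i; fin_cases i <;> simp

lemma V_smul (c x y : ℝ) : c • V x y = V (c * x) (c * y) := by
  ext i; fin_cases i <;> simp

lemma V_eq_smul_add_smul (x y : ℝ) : V x y = x • V 1 0 + y • V 0 1 := by
  rw [V_smul, V_smul, V_add]; simp

lemma hasDerivAt_V {f g : ℝ → ℝ} {f' g' t : ℝ} (hf : HasDerivAt f f' t)
    (hg : HasDerivAt g g' t) : HasDerivAt (fun s => V (f s) (g s)) (V f' g') t := by
  simp_rw [V_eq_smul_add_smul (f _), V_eq_smul_add_smul f']
  exact (hf.smul_const _).add (hg.smul_const _)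

lemma Rot_V (α x y : ℝ) :
    Rot α (V x y) = V (cos α * x - sin α * y) (sin α * x + cos α * y) := by
  simp [Rot]

noncomputable def rotCLM (α : ℝ) : EuclideanSpace ℝ (Fin 2) →L[ℝ] EuclideanSpace ℝ (Fin 2) :=
  LinearMap.toContinuousLinearMap
    { toFun := Rot α
      map_add' := fun p q => by
        simp only [Rot, PiLp.add_apply, V_add]; congr 1 <;> ring
      map_smul' := fun c p => by
        simp only [Rot, PiLp.smul_apply, smul_eq_mul, RingHom.id_apply, V_smul]
        congr 1 <;> ring }

lemma Rot_sub (α : ℝ) (v w : EuclideanSpace ℝ (Fin 2)) : Rot α (v - w) = Rot α v - Rot α w :=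
  map_sub (rotCLM α) v w

lemma Rot_smul (α c : ℝ) (v : EuclideanSpace ℝ (Fin 2)) : Rot α (c • v) = c • Rot α v :=
  map_smul (rotCLM α) c v

lemma RotP_add_self (P v : EuclideanSpace ℝ (Fin 2)) (α : ℝ) :
    RotP P α (P + v) = P + Rot α v := by
  simp [RotP]

lemma hasDerivAt_RotP {c : ℝ → EuclideanSpace ℝ (Fin 2)} {c' : EuclideanSpace ℝ (Fin 2)}
    {t : ℝ} (hc : HasDerivAt c c' t) (P : EuclideanSpace ℝ (Fin 2)) (α : ℝ) :
    HasDerivAt (fun s => RotP P α (c s)) (Rot α c') t := by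
  have h := (rotCLM α).hasFDerivAt.comp_hasDerivAt t (hc.sub_const P)
  exact h.const_add P

end Plane

section Frames

variable (θ : ℝ)

lemma Rot_neg_V_cos_sin : Rot (-θ) (V (cos θ) (sin θ)) = V 1 0 := by
  rw [Rot_V, cos_neg, sin_neg]
  congr 1
  · linear_combination cos_sq_add_sin_sq θ
  · ring

lemma Rot_neg_V_sin_neg_cos : Rot (-θ) (V (sin θ) (-cos θ)) = V 0 (-1) := by
  rw [Rot_V, cos_neg, sin_neg]
  congr 1
  · ring
  · linear_combination -sin_sq_add_cos_sq θ

lemma Rot_V_cos_neg_sin : Rot θ (V (cos θ) (-sin θ)) = V 1 0 := by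
  rw [Rot_V]
  congr 1
  · linear_combination cos_sq_add_sin_sq θ
  · ring

lemma Rot_V_sin_cos : Rot θ (V (sin θ) (cos θ)) = V 0 1 := by
  rw [Rot_V]
  congr 1
  · ring
  · linear_combination sin_sq_add_cos_sq θ

end Frames

section Involutes

/-- The flank `c₁ - O₁` of gear 1: the involute of the circle of radius `r` about the origin,
starting at `(0, -r)`. -/
noncomputable def upperInvolute (r θ : ℝ) : EuclideanSpace ℝ (Fin 2) :=
  r • V (sin θ) (-cos θ) - (r * θ) • V (cos θ) (sin θ)

/-- The flank `c₂ - O₂` of gear 2, the mirror image of `upperInvolute r` in the x-axis. -/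
noncomputable def lowerInvolute (r ψ : ℝ) : EuclideanSpace ℝ (Fin 2) :=
  r • V (sin ψ) (cos ψ) - (r * ψ) • V (cos ψ) (-sin ψ)

variable (r : ℝ)

lemma Rot_neg_upperInvolute_self (θ : ℝ) :
    Rot (-θ) (upperInvolute r θ) = V (-(r * θ)) (-r) := by
  rw [upperInvolute, Rot_sub, Rot_smul, Rot_smul,
    Rot_neg_V_sin_neg_cos, Rot_neg_V_cos_sin, V_smul, V_smul]
  ext i; fin_cases i <;> simp

lemma Rot_lowerInvolute_self (ψ : ℝ) :
    Rot ψ (lowerInvolute r ψ) = V (-(r * ψ)) r := by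
  rw [lowerInvolute, Rot_sub, Rot_smul, Rot_smul,
    Rot_V_sin_cos, Rot_V_cos_neg_sin, V_smul, V_smul]
  ext i; fin_cases i <;> simp

lemma hasDerivAt_upperInvolute (θ : ℝ) :
    HasDerivAt (upperInvolute r) ((r * θ) • V (sin θ) (-cos θ)) θ := by
  have hradial : HasDerivAt (fun s => V (sin s) (-cos s)) (V (cos θ) (sin θ)) θ := by
    simpa using hasDerivAt_V (hasDerivAt_sin θ) (hasDerivAt_cos θ).neg
  have hstring : HasDerivAt (fun s => V (cos s) (sin s)) (V (-sin θ) (cos θ)) θ :=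
    hasDerivAt_V (hasDerivAt_cos θ) (hasDerivAt_sin θ)
  have hlength : HasDerivAt (fun s => r * s) r θ := by
    simpa using (hasDerivAt_id θ).const_mul r
  refine ((hradial.const_smul r).sub (hlength.smul hstring)).congr_deriv ?_
  ext i; fin_cases i <;> simp

lemma hasDerivAt_lowerInvolute (ψ : ℝ) :
    HasDerivAt (lowerInvolute r) ((r * ψ) • V (sin ψ) (cos ψ)) ψ := by
  have hradial : HasDerivAt (fun s => V (sin s) (cos s)) (V (cos ψ) (-sin ψ)) ψ :=
    hasDerivAt_V (hasDerivAt_sin ψ) (hasDerivAt_cos ψ)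
  have hstring : HasDerivAt (fun s => V (cos s) (-sin s)) (V (-sin ψ) (-cos ψ)) ψ :=
    hasDerivAt_V (hasDerivAt_cos ψ) (hasDerivAt_sin ψ).neg
  have hlength : HasDerivAt (fun s => r * s) r ψ := by
    simpa using (hasDerivAt_id ψ).const_mul r
  refine ((hradial.const_smul r).sub (hlength.smul hstring)).congr_deriv ?_
  ext i; fin_cases i <;> simp

end Involutes

theorem involute_gear_pair_tangential_contact_general
    (r₁ r₂ : ℝ) (h₂ : 0 < r₂)
    (O₁ O₂ : EuclideanSpace ℝ (Fin 2))
    (hO₁ : O₁ = V 0 r₁) (hO₂ : O₂ = V 0 (-r₂))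
    (c₁ c₂ : ℝ → EuclideanSpace ℝ (Fin 2))
    (hc₁ : ∀ θ : ℝ, c₁ θ =
      O₁ + r₁ • V (Real.sin θ) (-Real.cos θ)
         - (r₁ * θ) • V (Real.cos θ) (Real.sin θ))
    (hc₂ : ∀ ψ : ℝ, c₂ ψ =
      O₂ + r₂ • V (Real.sin ψ) (Real.cos ψ)
         - (r₂ * ψ) • V (Real.cos ψ) (-Real.sin ψ)) :
    ∀ φ : ℝ, 0 ≤ φ →
      RotP O₁ (-φ) (c₁ φ) = V (-(r₁ * φ)) 0 ∧
      RotP O₂ ((r₁ / r₂) * φ) (c₂ ((r₁ / r₂) * φ)) = V (-(r₁ * φ)) 0 ∧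
      (∃ a : ℝ, deriv (fun θ => RotP O₁ (-φ) (c₁ θ)) φ = a • V 0 1) ∧
      (∃ b : ℝ, deriv (fun ψ => RotP O₂ ((r₁ / r₂) * φ) (c₂ ψ)) ((r₁ / r₂) * φ) =
        b • V 0 1) := by
  intro φ _
  set α := r₁ / r₂ * φ
  have hα : r₂ * α = r₁ * φ := by simp only [α]; field_simp
  obtain rfl : c₁ = fun θ => O₁ + upperInvolute r₁ θ := funext fun θ => by
    rw [hc₁, add_sub_assoc, upperInvolute]
  obtain rfl : c₂ = fun ψ => O₂ + lowerInvolute r₂ ψ := funext fun ψ => by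
    rw [hc₂, add_sub_assoc, lowerInvolute]
  subst hO₁ hO₂
  refine ⟨?_, ?_, ⟨-(r₁ * φ), ?_⟩, ⟨r₂ * α, ?_⟩⟩
  · rw [RotP_add_self, Rot_neg_upperInvolute_self, V_add]; simp
  · rw [RotP_add_self, Rot_lowerInvolute_self, V_add, hα]; simp
  · rw [(hasDerivAt_RotP ((hasDerivAt_upperInvolute r₁ φ).const_add _) _ _).deriv, Rot_smul,
      Rot_neg_V_sin_neg_cos, V_smul, V_smul]
    simp
  · rw [(hasDerivAt_RotP ((hasDerivAt_lowerInvolute r₂ α).const_add _) _ _).deriv, Rot_smul,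
      Rot_V_sin_cos]

/-- Meshing involute gear pair: as gear 1 (base circle of radius `r₁`, centered
at `O₁ = (0, r₁)`) rotates clockwise by `φ` and gear 2 (base circle of radius
`r₂`, centered at `O₂ = (0, −r₂)`) rotates counterclockwise by `α = (r₁/r₂)φ`,
the two rotated involute tooth flanks meet at the common point `(−r₁φ, 0)` on
the common tangent line (the x-axis) of the base circles, and at this point
both rotated involute curves have tangent vector parallel to `(0, 1)`, i.e.
perpendicular to the x-axis. -/
theorem involute_gear_pair_tangential_contact
    (r₁ r₂ : ℝ) (h₁ : 0 < r₁) (h₂ : 0 < r₂)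
    (O₁ O₂ : EuclideanSpace ℝ (Fin 2))
    (hO₁ : O₁ = V 0 r₁) (hO₂ : O₂ = V 0 (-r₂))
    (c₁ c₂ : ℝ → EuclideanSpace ℝ (Fin 2))
    (hc₁ : ∀ θ : ℝ, c₁ θ =
      O₁ + r₁ • V (Real.sin θ) (-Real.cos θ)
         - (r₁ * θ) • V (Real.cos θ) (Real.sin θ))
    (hc₂ : ∀ ψ : ℝ, c₂ ψ =
      O₂ + r₂ • V (Real.sin ψ) (Real.cos ψ)
         - (r₂ * ψ) • V (Real.cos ψ) (-Real.sin ψ)) :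
    ∀ φ : ℝ, 0 ≤ φ →
      RotP O₁ (-φ) (c₁ φ) = V (-(r₁ * φ)) 0 ∧
      RotP O₂ ((r₁ / r₂) * φ) (c₂ ((r₁ / r₂) * φ)) = V (-(r₁ * φ)) 0 ∧
      (∃ a : ℝ, deriv (fun θ => RotP O₁ (-φ) (c₁ θ)) φ = a • V 0 1) ∧
      (∃ b : ℝ, deriv (fun ψ => RotP O₂ ((r₁ / r₂) * φ) (c₂ ψ)) ((r₁ / r₂) * φ) =
        b • V 0 1) :=
  involute_gear_pair_tangential_contact_general r₁ r₂ h₂ O₁ O₂ hO₁ hO₂ c₁ c₂ hc₁ hc₂
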